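/- arXiv:1112.0791 — 4 statements merged into one kernel-verified Lean document; each statement's English description precedes it below -/
import Mathlib

section
/- For all ranked optimization problems P and Q (both interpreted as CO problems or both interpreted as ASO problems) and every rank interval [i,j], P ≡^{s,[i,j]} Q if and only if the following three conditions hold: (1) π(P_{<i}) = π(Q_{<i}); (2) (>^P)_{π(P_{<i})} = (>^Q)_{π(Q_{<i})}; (3) for every I, J ∈ π(P_{<i}) such that i < diff^P(I,J) or i < diff^Q(I,J), either diff^P(I,J) = diff^Q(I,J), or both diff^P(I,J) > j and diff^Q(I,J) > j. -/
open scoped Classical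

/-- Propositional formulas over a universe `U` of atoms, built from atoms,
`⊥`, conjunction, disjunction and implication. -/
inductive Formula (U : Type) : Type where
  | atom : U → Formula U
  | bot  : Formula U
  | conj : Formula U → Formula U → Formula U
  | disj : Formula U → Formula U → Formula U
  | imp  : Formula U → Formula U → Formula U

variable {U : Type}

/-- Classical satisfaction `I ⊨ φ`. -/
def Sat (I : Set U) : Formula U → Prop
  | .atom a => a ∈ I
  | .bot => False
  | .conj φ ψ => Sat I φ ∧ Sat I ψ
  | .disj φ ψ => Sat I φ ∨ Sat I ψ
  | .imp φ ψ => Sat I φ → Sat I ψ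

/-- Classical satisfaction of a theory. -/
def SatTheory (I : Set U) (T : Set (Formula U)) : Prop := ∀ φ ∈ T, Sat I φ

/-- `Mod T`: the classical models of a theory `T`. -/
def models (T : Set (Formula U)) : Set (Set U) := {I | SatTheory I T}

/-- HT-satisfaction `⟨I, J⟩ ⊨_HT φ` (for `I ⊆ J`). -/
def SatHT (I J : Set U) : Formula U → Prop
  | .atom a => a ∈ I
  | .bot => False
  | .conj φ ψ => SatHT I J φ ∧ SatHT I J ψ
  | .disj φ ψ => SatHT I J φ ∨ SatHT I J ψ
  | .imp φ ψ => Sat J (Formula.imp φ ψ) ∧ (¬ SatHT I J φ ∨ SatHT I J ψ)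

/-- HT-satisfaction of a theory. -/
def SatHTTheory (I J : Set U) (T : Set (Formula U)) : Prop := ∀ φ ∈ T, SatHT I J φ

/-- `HT T`: the set of HT-models `⟨I,J⟩` (with `I ⊆ J`) of a theory `T`. -/
def HTmod (T : Set (Formula U)) : Set (Set U × Set U) :=
  {p | p.1 ⊆ p.2 ∧ SatHTTheory p.1 p.2 T}

/-- `AS T`: the equilibrium models (answer sets) of a theory `T`. -/
def AS (T : Set (Formula U)) : Set (Set U) :=
  {I | SatHTTheory I I T ∧ ∀ J : Set U, J ⊂ I → ¬ SatHTTheory J I T}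

/-- A ranked preference rule `φ₁ > ⋯ > φₖ ←ʲ ψ` with nonempty head and rank `j ≥ 1`. -/
structure Rule (U : Type) : Type where
  head : List (Formula U)
  body : Formula U
  rank : ℕ
  head_ne : head ≠ []
  rank_pos : 1 ≤ rank

/-- Satisfaction degree `v_I(r)`: the least (1-based) index of a satisfied head formula
if `I` satisfies the body and some head formula; `1` otherwise. -/
noncomputable def degree (I : Set U) (r : Rule U) : ℕ :=
  if Sat I r.body ∧ ∃ φ ∈ r.head, Sat I φ then
    sInf {n : ℕ | ∃ k : Fin r.head.length, n = k.1 + 1 ∧ Sat I (r.head.get k)}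
  else 1

/-- The strict preference `I >^S J` induced by a selector `S`. -/
def gtSel (S : Set (Rule U)) (I J : Set U) : Prop :=
  ∃ r' ∈ S, degree I r' < degree J r' ∧
    (∀ r ∈ S, r.rank = r'.rank → degree I r ≤ degree J r) ∧
    (∀ r ∈ S, r.rank < r'.rank → degree I r = degree J r)

/-- The indifference `I ≈^S J` induced by a selector `S`. -/
def simSel (S : Set (Rule U)) (I J : Set U) : Prop :=
  ∀ r ∈ S, degree I r = degree J r

/-- The preference `I ≥^S J` induced by a selector `S`. -/
def geSel (S : Set (Rule U)) (I J : Set U) : Prop :=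
  simSel S I J ∨ gtSel S I J

/-- An optimization problem: a generator theory plus a finite selector. -/
structure OptProblem (U : Type) : Type where
  gen : Set (Formula U)
  sel : Set (Rule U)
  sel_finite : sel.Finite

/-- Union of optimization problems. -/
def OptProblem.union (P Q : OptProblem U) : OptProblem U :=
  ⟨P.gen ∪ Q.gen, P.sel ∪ Q.sel, P.sel_finite.union Q.sel_finite⟩

/-- `P_{<i}`: the restriction of `P` to preference rules of rank `< i`. -/
def OptProblem.below (P : OptProblem U) (i : ℕ) : OptProblem U :=
  ⟨P.gen, {r ∈ P.sel | r.rank < i}, P.sel_finite.subset (Set.sep_subset _ _)⟩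

/-- The two semantics for generators: classical (CO problems) and
equilibrium-model/answer-set (ASO problems). -/
inductive Sem : Type where
  | co : Sem
  | aso : Sem

/-- `μ(P)`: the outcomes of `P` under the chosen semantics. -/
def outcomes (sem : Sem) (P : OptProblem U) : Set (Set U) :=
  match sem with
  | Sem.co => models P.gen
  | Sem.aso => AS P.gen

/-- `π(P)`: the preferred (optimal) outcomes of `P`. -/
def pref (sem : Sem) (P : OptProblem U) : Set (Set U) :=
  {I | I ∈ outcomes sem P ∧ ¬ ∃ J ∈ outcomes sem P, gtSel P.sel J I}

/-- `diff^P(I,J)`: the largest `k` with `I ≈^{P_{<k}} J` (`∞` if this holds for all `k`). -/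
noncomputable def diff (P : OptProblem U) (I J : Set U) : ℕ∞ :=
  if ∀ k : ℕ, simSel (P.below k).sel I J then ⊤
  else ((sSup {k : ℕ | simSel (P.below k).sel I J} : ℕ) : ℕ∞)

/-- Restriction `≻_V` of a relation on interpretations to a set `V` of interpretations. -/
def restrictRel (rel : Set U → Set U → Prop) (V : Set (Set U)) : Set U → Set U → Prop :=
  fun A B => rel A B ∧ A ∈ V ∧ B ∈ V

/-- All rules of `S` have rank in the interval `[i,j]` (`j` may be `∞`). -/
def inRankInterval (i : ℕ) (j : ℕ∞) (S : Set (Rule U)) : Prop :=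
  ∀ r ∈ S, i ≤ r.rank ∧ (r.rank : ℕ∞) ≤ j

/-- Strong sel-equivalence `P ≡^{s,[i,j]} Q`: same preferred outcomes under addition of any
context from `L^{s,[i,j]}` (empty generator, selector with ranks in `[i,j]`). -/
def seqv (sem : Sem) (i : ℕ) (j : ℕ∞) (P Q : OptProblem U) : Prop :=
  ∀ R : OptProblem U, R.gen = ∅ → inRankInterval i j R.sel →
    pref sem (P.union R) = pref sem (Q.union R)

/-- Strong gen-equivalence `P ≡_g Q`: same preferred outcomes under addition of any
generator context from `L^g` (empty selector). -/
def geqv (sem : Sem) (P Q : OptProblem U) : Prop :=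
  ∀ R : OptProblem U, R.sel = ∅ →
    pref sem (P.union R) = pref sem (Q.union R)

/-- Strong (combined) equivalence `P ≡^{s,[i,j]}_g Q`: same preferred outcomes under addition
of any context from `L^{[i,j]}` (arbitrary generator, selector with ranks in `[i,j]`). -/
def sgeqv (sem : Sem) (i : ℕ) (j : ℕ∞) (P Q : OptProblem U) : Prop :=
  ∀ R : OptProblem U, inRankInterval i j R.sel →
    pref sem (P.union R) = pref sem (Q.union R)

/-!
For a context `R` of rank `≥ i` with no generator, an outcome is preferred in `P ∪ R` iff it is
preferred in `P_{<i}` and no `P_{<i}`-preferred outcome beats it in `P ∪ R`; and dominance for a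
union of selectors is decided at the smaller of the two first-difference ranks. Conditions (1)–(3)
therefore make `P ∪ R` and `Q ∪ R` agree. Conversely, contexts are built from formulas pinning
down the atoms of `P` and `Q` on two outcomes `A`, `B`: the rule `φA ∨ φB > ¬(φA ∨ φB)` at rank
`i` makes every other outcome lose to `B`, so `B` stays preferred iff `A` does not beat it. This
transfers dominance between `P` and `Q`, and an extra rule penalizing `B` at rank `k ∈ [i, j]`
detects whether the first difference of `A` and `B` lies beyond `k`.
-/

namespace Formula

def neg (φ : Formula U) : Formula U := φ.imp .bot

def top : Formula U := (Formula.bot : Formula U).neg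

noncomputable def atoms : Formula U → Finset U
  | .atom a => {a}
  | .bot => ∅
  | .conj φ ψ | .disj φ ψ | .imp φ ψ => φ.atoms ∪ ψ.atoms

@[simp] lemma sat_neg {I : Set U} {φ : Formula U} : Sat I φ.neg ↔ ¬ Sat I φ := Iff.rfl

@[simp] lemma sat_top {I : Set U} : Sat I (Formula.top : Formula U) := id

lemma sat_congr {I K : Set U} (φ : Formula U) (h : ∀ a ∈ φ.atoms, (a ∈ I ↔ a ∈ K)) :
    Sat I φ ↔ Sat K φ := by
  induction φ with
  | atom a => exact h a (Finset.mem_singleton_self a)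
  | bot => exact Iff.rfl
  | conj φ ψ ihφ ihψ | disj φ ψ ihφ ihψ | imp φ ψ ihφ ihψ =>
    have hφ := ihφ fun a ha => h a (Finset.mem_union_left _ ha)
    have hψ := ihψ fun a ha => h a (Finset.mem_union_right _ ha)
    simp only [Sat, hφ, hψ]

noncomputable def profile (L : List U) (I : Set U) : Formula U :=
  L.foldr (fun a φ => .conj (if a ∈ I then .atom a else (Formula.atom a).neg) φ) top

lemma sat_profile {K I : Set U} {L : List U} :
    Sat K (profile L I) ↔ ∀ a ∈ L, (a ∈ K ↔ a ∈ I) := by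
  induction L with
  | nil => simp [profile]
  | cons a L ih =>
    rw [List.forall_mem_cons, ← ih]
    by_cases ha : a ∈ I <;> simp [profile, Sat, ha]

end Formula

noncomputable def Rule.atoms (r : Rule U) : Finset U :=
  r.body.atoms ∪ r.head.toFinset.biUnion Formula.atoms

lemma degree_congr {I K : Set U} (r : Rule U) (h : ∀ a ∈ r.atoms, (a ∈ I ↔ a ∈ K)) :
    degree I r = degree K r := by
  have hsat : ∀ φ, (φ = r.body ∨ φ ∈ r.head) → (Sat I φ ↔ Sat K φ) := by
    rintro φ hφ
    refine φ.sat_congr fun a ha => h a ?_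
    rcases hφ with rfl | hφ
    · exact Finset.mem_union_left _ ha
    · exact Finset.mem_union_right _ (Finset.mem_biUnion.2 ⟨φ, List.mem_toFinset.2 hφ, ha⟩)
  have hhead : ∀ k, Sat I (r.head.get k) ↔ Sat K (r.head.get k) :=
    fun k => hsat _ (Or.inr (List.get_mem _ _))
  unfold degree
  simp only [hsat _ (Or.inl rfl), hhead]
  congr 1
  exact propext (and_congr_right fun _ => exists_congr fun φ =>
    and_congr_right fun hφ => hsat φ (Or.inr hφ))

lemma exists_finset_simSel {S : Set (Rule U)} (hS : S.Finite) :
    ∃ W : Finset U, ∀ I K : Set U, (∀ a ∈ W, (a ∈ I ↔ a ∈ K)) → simSel S I K :=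
  ⟨hS.toFinset.biUnion Rule.atoms, fun _ _ h r hr => degree_congr r fun a ha =>
    h a (Finset.mem_biUnion.2 ⟨r, hS.mem_toFinset.2 hr, ha⟩)⟩

/-- The rule `φ > ¬φ ← ⊤` of rank `k`. -/
def binRule (φ : Formula U) (k : ℕ) (hk : 1 ≤ k) : Rule U :=
  ⟨[φ, φ.neg], .top, k, List.cons_ne_nil _ _, hk⟩

lemma degree_binRule (I : Set U) (φ : Formula U) (k : ℕ) (hk : 1 ≤ k) :
    degree I (binRule φ k hk) = if Sat I φ then 1 else 2 := by
  have hset : {n : ℕ | ∃ m : Fin 2, n = m.1 + 1 ∧ Sat I ([φ, φ.neg].get m)} =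
      {if Sat I φ then 1 else 2} := by
    ext n
    simp only [Set.mem_ofPred_eq, Fin.exists_fin_two, List.get_eq_getElem,
      Set.mem_singleton_iff]
    by_cases h : Sat I φ <;> simp [h]
  rw [degree, if_pos ⟨Formula.sat_top, by by_cases h : Sat I φ <;> simp [binRule, h]⟩]
  exact (congrArg sInf hset).trans (csInf_singleton _)

section Selector

variable {S R : Set (Rule U)} {I J I' J' : Set U} {r : Rule U}

noncomputable def selDiff (S : Set (Rule U)) (I J : Set U) : ℕ∞ :=
  if ∀ k : ℕ, simSel {r ∈ S | r.rank < k} I J then ⊤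
  else ((sSup {k : ℕ | simSel {r ∈ S | r.rank < k} I J} : ℕ) : ℕ∞)

lemma diff_eq_selDiff (P : OptProblem U) (I J : Set U) : diff P I J = selDiff P.sel I J := rfl

lemma le_selDiff_iff {k : ℕ} :
    (k : ℕ∞) ≤ selDiff S I J ↔ ∀ r ∈ S, r.rank < k → degree I r = degree J r := by
  have hiff : ∀ k, simSel {r ∈ S | r.rank < k} I J ↔
      ∀ r ∈ S, r.rank < k → degree I r = degree J r :=
    fun k => ⟨fun h r hr hk => h r ⟨hr, hk⟩, fun h r hr => h r hr.1 hr.2⟩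
  have hanti : ∀ {k l : ℕ}, k ≤ l → simSel {r ∈ S | r.rank < l} I J →
      simSel {r ∈ S | r.rank < k} I J :=
    fun hkl h r hr => h r ⟨hr.1, hr.2.trans_le hkl⟩
  rw [← hiff]
  unfold selDiff
  split_ifs with hall
  · simp [hall k]
  · obtain ⟨l, hl⟩ := not_forall.1 hall
    have hbdd : BddAbove {k | simSel {r ∈ S | r.rank < k} I J} :=
      ⟨l, fun k hk => le_of_not_gt fun hlk => hl (hanti hlk.le hk)⟩
    have hzero : simSel {r ∈ S | r.rank < 0} I J :=
      fun r hr => absurd hr.2 (Nat.not_lt_zero _)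
    rw [Nat.cast_le]
    exact ⟨fun h => hanti h (Nat.sSup_mem ⟨0, hzero⟩ hbdd), fun h => le_csSup hbdd h⟩

lemma selDiff_comm : selDiff S I J = selDiff S J I :=
  ENat.eq_of_forall_natCast_le_iff fun _ => by
    simp only [le_selDiff_iff]
    exact forall₃_congr fun _ _ _ => eq_comm

lemma selDiff_union : selDiff (S ∪ R) I J = min (selDiff S I J) (selDiff R I J) :=
  ENat.eq_of_forall_natCast_le_iff fun _ => by
    simp only [le_min_iff, le_selDiff_iff, Set.mem_union, or_imp, forall_and]

lemma degree_eq_of_rank_lt_selDiff (hr : r ∈ S) (h : (r.rank : ℕ∞) < selDiff S I J) :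
    degree I r = degree J r :=
  le_selDiff_iff.1 (by exact_mod_cast Order.add_one_le_of_lt h) r hr (Nat.lt_succ_self _)

lemma selDiff_le_rank (hr : r ∈ S) (h : degree I r ≠ degree J r) :
    selDiff S I J ≤ r.rank :=
  not_lt.1 fun hlt => h (degree_eq_of_rank_lt_selDiff hr hlt)

lemma selDiff_eq_top_iff : selDiff S I J = ⊤ ↔ simSel S I J := by
  simp only [ENat.eq_top_iff_forall_ge, le_selDiff_iff]
  exact ⟨fun h r hr => h (r.rank + 1) r hr (Nat.lt_succ_self _), fun h _ r hr _ => h r hr⟩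

lemma exists_rank_eq_selDiff (h : selDiff S I J ≠ ⊤) :
    ∃ r ∈ S, (r.rank : ℕ∞) = selDiff S I J ∧ degree I r ≠ degree J r := by
  obtain ⟨r, hr, hne⟩ : ∃ r ∈ S, degree I r ≠ degree J r := by
    by_contra! hsim
    exact h (selDiff_eq_top_iff.2 hsim)
  obtain ⟨r, ⟨hr, hne⟩, hmin⟩ :=
    (measure Rule.rank).wf.has_min {r | r ∈ S ∧ degree I r ≠ degree J r} ⟨r, hr, hne⟩
  refine ⟨r, hr, le_antisymm (le_selDiff_iff.2 fun r' hr' hlt => ?_) (selDiff_le_rank hr hne),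
    hne⟩
  by_contra hne'
  exact hmin r' ⟨hr', hne'⟩ hlt

lemma selDiff_eq_rank (hr : r ∈ S) (hne : degree I r ≠ degree J r)
    (hlow : ∀ r' ∈ S, r'.rank < r.rank → degree I r' = degree J r') :
    selDiff S I J = r.rank :=
  le_antisymm (selDiff_le_rank hr hne) (le_selDiff_iff.2 hlow)

lemma gtSel_iff : gtSel S I J ↔ selDiff S I J ≠ ⊤ ∧
    ∀ r ∈ S, (r.rank : ℕ∞) = selDiff S I J → degree I r ≤ degree J r := by
  constructor
  · rintro ⟨r', hr', hlt, hsame, hlow⟩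
    rw [selDiff_eq_rank hr' hlt.ne hlow]
    exact ⟨ENat.natCast_ne_top _, fun r hr hrk => hsame r hr (Nat.cast_injective hrk)⟩
  · rintro ⟨hne, hle⟩
    obtain ⟨r', hr', hrank, hdeg⟩ := exists_rank_eq_selDiff hne
    refine ⟨r', hr', (hle r' hr' hrank).lt_of_ne hdeg, fun r hr hrk => hle r hr (hrk ▸ hrank),
      fun r hr hrk => degree_eq_of_rank_lt_selDiff hr (hrank ▸ Nat.cast_lt.2 hrk)⟩

lemma degree_le_of_gtSel (hg : gtSel S I J) (hr : r ∈ S)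
    (hrank : (r.rank : ℕ∞) ≤ selDiff S I J) : degree I r ≤ degree J r := by
  rcases hrank.eq_or_lt with heq | hlt
  · exact (gtSel_iff.1 hg).2 r hr heq
  · exact (degree_eq_of_rank_lt_selDiff hr hlt).le

lemma not_gtSel_of_simSel (h : simSel S I J) : ¬ gtSel S I J :=
  fun ⟨r, hr, hlt, _⟩ => hlt.ne (h r hr)

lemma gtSel_congr (hI : simSel S I I') (hJ : simSel S J J') : gtSel S I J ↔ gtSel S I' J' := by
  unfold gtSel
  refine exists_congr fun r' => and_congr_right fun hr' => ?_
  rw [hI r' hr', hJ r' hr']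
  refine and_congr_right' (and_congr ?_ ?_) <;>
    exact forall₂_congr fun r hr => by rw [hI r hr, hJ r hr]

lemma gtSel_union_iff_of_lt (h : selDiff R I J < selDiff S I J) :
    gtSel (S ∪ R) I J ↔ ∀ r ∈ R, (r.rank : ℕ∞) = selDiff R I J → degree I r ≤ degree J r := by
  rw [gtSel_iff, selDiff_union, min_eq_right h.le]
  refine ⟨fun hg r hr => hg.2 r (Or.inr hr), fun hR => ⟨h.ne_top, ?_⟩⟩
  rintro r (hr | hr) hrk
  · exact (degree_eq_of_rank_lt_selDiff hr (hrk ▸ h)).le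
  · exact hR r hr hrk

lemma gtSel_union_iff_of_le (h : selDiff S I J ≤ selDiff R I J) :
    gtSel (S ∪ R) I J ↔
      gtSel S I J ∧ ∀ r ∈ R, (r.rank : ℕ∞) = selDiff S I J → degree I r ≤ degree J r := by
  simp only [gtSel_iff, selDiff_union, min_eq_left h, Set.mem_union, or_imp, forall_and,
    and_assoc]

lemma gtSel_union_iff_of_simSel (h : simSel R I J) : gtSel (S ∪ R) I J ↔ gtSel S I J := by
  rw [gtSel_union_iff_of_le (selDiff_eq_top_iff.2 h ▸ le_top)]
  exact and_iff_left fun r hr _ => (h r hr).le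

lemma gtSel_below_iff {i : ℕ} :
    gtSel {r ∈ S | r.rank < i} I J ↔ gtSel S I J ∧ selDiff S I J < i := by
  constructor
  · rintro ⟨r', ⟨hr', hr'i⟩, hlt, hsame, hlow⟩
    refine ⟨⟨r', hr', hlt, fun r hr hrk => hsame r ⟨hr, hrk ▸ hr'i⟩ hrk,
      fun r hr hrk => hlow r ⟨hr, hrk.trans hr'i⟩ hrk⟩, ?_⟩
    exact (selDiff_le_rank hr' hlt.ne).trans_lt (Nat.cast_lt.2 hr'i)
  · rintro ⟨⟨r', hr', hlt, hsame, hlow⟩, hi⟩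
    rw [selDiff_eq_rank hr' hlt.ne hlow, Nat.cast_lt] at hi
    exact ⟨r', ⟨hr', hi⟩, hlt, fun r hr hrk => hsame r hr.1 hrk,
      fun r hr hrk => hlow r hr.1 hrk⟩

end Selector

section Problems

variable {sem : Sem} {P R : OptProblem U} {i : ℕ} {I K : Set U}

lemma outcomes_below (sem : Sem) (P : OptProblem U) (i : ℕ) :
    outcomes sem (P.below i) = outcomes sem P := by
  cases sem <;> rfl

lemma outcomes_union_of_gen_eq_empty (hR : R.gen = ∅) :
    outcomes sem (P.union R) = outcomes sem P := by
  cases sem <;> simp [outcomes, OptProblem.union, hR]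

lemma mem_outcomes_of_mem_pref_below (hI : I ∈ pref sem (P.below i)) : I ∈ outcomes sem P :=
  outcomes_below sem P i ▸ hI.1

lemma sep_union_rank_lt {S : Set (Rule U)} (hS : ∀ r ∈ S, i ≤ r.rank) :
    {r ∈ P.sel ∪ S | r.rank < i} = (P.below i).sel := by
  ext r
  simp only [OptProblem.below, Set.mem_union, Set.mem_ofPred_eq]
  exact ⟨fun ⟨hr, hri⟩ => ⟨hr.resolve_right fun hS' => (hS r hS').not_gt hri, hri⟩,
    fun ⟨hr, hri⟩ => ⟨Or.inl hr, hri⟩⟩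

lemma le_selDiff_of_mem_pref_below {T : Set (Rule U)}
    (hT : {r ∈ T | r.rank < i} = (P.below i).sel) (hI : I ∈ pref sem (P.below i))
    (hK : K ∈ outcomes sem P) (hg : gtSel T K I) : (i : ℕ∞) ≤ selDiff T K I :=
  not_lt.1 fun hlt => hI.2 ⟨K, (outcomes_below sem P i).symm ▸ hK,
    hT ▸ gtSel_below_iff.2 ⟨hg, hlt⟩⟩

lemma mem_pref_union_iff (hRg : R.gen = ∅) (hR : ∀ r ∈ R.sel, i ≤ r.rank) :
    I ∈ pref sem (P.union R) ↔
      I ∈ pref sem (P.below i) ∧ ∀ J ∈ pref sem (P.below i), ¬ gtSel (P.sel ∪ R.sel) J I := by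
  simp only [pref, Set.mem_ofPred_eq, outcomes_union_of_gen_eq_empty hRg, outcomes_below,
    not_exists, not_and]
  constructor
  · rintro ⟨hI, hnd⟩
    refine ⟨⟨hI, fun K hK hg => hnd K hK ?_⟩, fun J hJ => hnd J hJ.1⟩
    exact (gtSel_below_iff.1 (sep_union_rank_lt hR ▸ hg)).1
  · rintro ⟨⟨hI, hIb⟩, hprot⟩
    refine ⟨hI, fun J hJ hg => hprot J ⟨hJ, fun K hK hKJ => hIb K hK ?_⟩ hg⟩
    have hd := le_selDiff_of_mem_pref_below (sep_union_rank_lt hR)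
      ⟨hI, by simpa [outcomes_below] using hIb⟩ hJ hg
    refine (gtSel_congr (fun _ _ => rfl) fun r hr => ?_).1 hKJ
    exact le_selDiff_iff.1 hd r (Or.inl hr.1) hr.2

lemma not_gtSel_of_degree_lt {S : Set (Rule U)} (hS : ∀ r ∈ S, i ≤ r.rank)
    (hI : I ∈ pref sem (P.below i)) (hK : K ∈ outcomes sem P) {r : Rule U} (hr : r ∈ S)
    (hrank : r.rank = i) (hlt : degree I r < degree K r) : ¬ gtSel (P.sel ∪ S) K I :=
  fun hg => (degree_le_of_gtSel hg (Or.inr hr)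
    (hrank ▸ le_selDiff_of_mem_pref_below (sep_union_rank_lt hS) hI hK hg)).not_gt hlt

end Problems

lemma seqv_symm {sem : Sem} {i : ℕ} {j : ℕ∞} {P Q : OptProblem U} (h : seqv sem i j P Q) :
    seqv sem i j Q P :=
  fun R hRg hR => (h R hRg hR).symm

structure Separating (S : Set (Rule U)) (A B : Set U) (φA φB : Formula U) : Prop where
  sat_left : Sat A φA
  sat_right : Sat B φB
  exclusive : ∀ K, Sat K φA → ¬ Sat K φB
  simSel_left : ∀ K, Sat K φA → simSel S K A
  simSel_right : ∀ K, Sat K φB → simSel S K B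

namespace Separating

variable {S T : Set (Rule U)} {A B : Set U} {φA φB : Formula U}

lemma mono (h : Separating T A B φA φB) (hST : S ⊆ T) : Separating S A B φA φB :=
  ⟨h.sat_left, h.sat_right, h.exclusive, fun K hK r hr => h.simSel_left K hK r (hST hr),
    fun K hK r hr => h.simSel_right K hK r (hST hr)⟩

lemma union_binRule_neg (h : Separating S A B φA φB) (k : ℕ) (hk : 1 ≤ k) :
    Separating (S ∪ {binRule φB.neg k hk}) A B φA φB := by
  have hnA : ¬ Sat A φB := h.exclusive A h.sat_left
  refine ⟨h.sat_left, h.sat_right, h.exclusive, fun K hK => ?_, fun K hK => ?_⟩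
  · rintro r (hr | rfl)
    · exact h.simSel_left K hK r hr
    · simp [degree_binRule, h.exclusive K hK, hnA]
  · rintro r (hr | rfl)
    · exact h.simSel_right K hK r hr
    · simp [degree_binRule, hK, h.sat_right]

end Separating

lemma exists_separating {S : Set (Rule U)} (hS : S.Finite) {A B : Set U} (hAB : A ≠ B) :
    ∃ φA φB, Separating S A B φA φB := by
  obtain ⟨W, hW⟩ := exists_finset_simSel hS
  obtain ⟨a, ha⟩ : ∃ a, ¬ (a ∈ A ↔ a ∈ B) := not_forall.1 (mt Set.ext hAB)
  refine ⟨Formula.profile (insert a W).toList A, Formula.profile (insert a W).toList B,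
    ?_, ?_, ?_, ?_, ?_⟩ <;>
    simp only [Formula.sat_profile, Finset.mem_toList, iff_self, implies_true]
  · exact fun K hKA hKB => ha ((hKA a (Finset.mem_insert_self a W)).symm.trans
      (hKB a (Finset.mem_insert_self a W)))
  · exact fun K hK => hW K A fun b hb => hK b (Finset.mem_insert_of_mem hb)
  · exact fun K hK => hW K B fun b hb => hK b (Finset.mem_insert_of_mem hb)

section Necessity

variable {sem : Sem} {P Q : OptProblem U} {i : ℕ} {j : ℕ∞} {A B : Set U} {φA φB : Formula U}

/-- With the rule `φA ∨ φB > ¬(φA ∨ φB)` at rank `i` in the context, every outcome other than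
(copies of) `A` and `B` loses to `B` at rank `i`, so `B` stays preferred unless `A` beats it. -/
lemma mem_pref_union_gadget_iff (hi : 1 ≤ i) {E : Set (Rule U)} (hE : E.Finite)
    (hErank : ∀ r ∈ E, i ≤ r.rank) (hsep : Separating (P.sel ∪ E) A B φA φB)
    (hA : A ∈ pref sem (P.below i)) (hB : B ∈ pref sem (P.below i)) :
    B ∈ pref sem
        (P.union ⟨∅, E ∪ {binRule (φA.disj φB) i hi}, hE.union (Set.finite_singleton _)⟩) ↔
      ¬ gtSel (P.sel ∪ E) A B := by
  set r₀ := binRule (φA.disj φB) i hi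
  have hr₀ : ∀ K, degree K r₀ = if Sat K (φA.disj φB) then 1 else 2 :=
    fun K => degree_binRule K _ i hi
  have hrank : ∀ r ∈ E ∪ {r₀}, i ≤ r.rank := by
    rintro r (hr | rfl)
    exacts [hErank r hr, le_rfl]
  have hB₀ : Sat B (φA.disj φB) := Or.inr hsep.sat_right
  have hdrop : ∀ K, Sat K (φA.disj φB) →
      (gtSel (P.sel ∪ E ∪ {r₀}) K B ↔ gtSel (P.sel ∪ E) K B) := fun K hK =>
    gtSel_union_iff_of_simSel fun r hr => by
      rw [Set.mem_singleton_iff.1 hr, hr₀, hr₀, if_pos hK, if_pos hB₀]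
  rw [mem_pref_union_iff rfl hrank]
  simp only [← Set.union_assoc]
  constructor
  · exact fun h => (hdrop A (Or.inl hsep.sat_left)).not.1 (h.2 A hA)
  · refine fun hAB => ⟨hB, fun K hK hg => ?_⟩
    by_cases hKA : Sat K φA
    · exact hAB ((gtSel_congr (hsep.simSel_left K hKA) fun _ _ => rfl).1
        ((hdrop K (Or.inl hKA)).1 hg))
    by_cases hKB : Sat K φB
    · exact not_gtSel_of_simSel (hsep.simSel_right K hKB) ((hdrop K (Or.inr hKB)).1 hg)
    refine not_gtSel_of_degree_lt hrank hB (mem_outcomes_of_mem_pref_below hK) (Or.inr rfl) rfl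
      ?_ (Set.union_assoc _ _ _ ▸ hg)
    rw [hr₀, hr₀, if_pos hB₀, if_neg (show ¬ Sat K (φA.disj φB) from
      not_or.2 ⟨hKA, hKB⟩)]
    exact Nat.one_lt_two

lemma gtSel_union_iff_of_seqv (hi : 1 ≤ i) (hij : (i : ℕ∞) ≤ j) (hseq : seqv sem i j P Q)
    (hpref : pref sem (P.below i) = pref sem (Q.below i))
    (hA : A ∈ pref sem (P.below i)) (hB : B ∈ pref sem (P.below i)) {E : Set (Rule U)}
    (hE : E.Finite) (hErank : inRankInterval i j E)
    (hsep : Separating (P.sel ∪ Q.sel ∪ E) A B φA φB) :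
    gtSel (P.sel ∪ E) A B ↔ gtSel (Q.sel ∪ E) A B := by
  have hctx : inRankInterval i j (E ∪ {binRule (φA.disj φB) i hi}) := by
    rintro r (hr | rfl)
    exacts [hErank r hr, ⟨le_rfl, hij⟩]
  have hErank' : ∀ r ∈ E, i ≤ r.rank := fun r hr => (hErank r hr).1
  rw [← not_iff_not,
    ← mem_pref_union_gadget_iff hi hE hErank'
      (hsep.mono (Set.union_subset_union_left _ Set.subset_union_left)) hA hB,
    ← mem_pref_union_gadget_iff hi hE hErank'
      (hsep.mono (Set.union_subset_union_left _ Set.subset_union_right)) (hpref ▸ hA) (hpref ▸ hB),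
    hseq _ rfl hctx]

lemma pref_below_subset_of_seqv (hi : 1 ≤ i) (hij : (i : ℕ∞) ≤ j) (hseq : seqv sem i j P Q) :
    pref sem (P.below i) ⊆ pref sem (Q.below i) := by
  intro I hI
  obtain ⟨W, hW⟩ := exists_finset_simSel P.sel_finite
  set φ := Formula.profile W.toList I
  have hφ : Sat I φ := Formula.sat_profile.2 fun _ _ => Iff.rfl
  let R : OptProblem U := ⟨∅, {binRule φ i hi}, Set.finite_singleton _⟩
  have hrank : ∀ r ∈ R.sel, i ≤ r.rank := by
    rintro r rfl
    exact le_rfl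
  have hIR : I ∈ pref sem (P.union R) := by
    refine (mem_pref_union_iff rfl hrank).2 ⟨hI, fun K hK hg => ?_⟩
    by_cases hKφ : Sat K φ
    · refine not_gtSel_of_simSel ?_ hg
      rintro r (hr | rfl)
      · exact hW K I (fun a ha => Formula.sat_profile.1 hKφ a (Finset.mem_toList.2 ha)) r hr
      · simp [degree_binRule, hKφ, hφ]
    · refine not_gtSel_of_degree_lt hrank hI (mem_outcomes_of_mem_pref_below hK) rfl rfl ?_ hg
      simp [degree_binRule, hKφ, hφ]
  rw [hseq R rfl (by rintro r rfl; exact ⟨le_rfl, hij⟩)] at hIR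
  exact ((mem_pref_union_iff rfl hrank).1 hIR).1

lemma gtSel_iff_gtSel_of_seqv (hi : 1 ≤ i) (hij : (i : ℕ∞) ≤ j) (hseq : seqv sem i j P Q)
    (hpref : pref sem (P.below i) = pref sem (Q.below i))
    (hA : A ∈ pref sem (P.below i)) (hB : B ∈ pref sem (P.below i)) :
    gtSel P.sel A B ↔ gtSel Q.sel A B := by
  rcases eq_or_ne A B with rfl | hAB
  · exact iff_of_false (not_gtSel_of_simSel fun _ _ => rfl) (not_gtSel_of_simSel fun _ _ => rfl)
  obtain ⟨φA, φB, hsep⟩ :=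
    exists_separating (S := P.sel ∪ Q.sel ∪ ∅) (by simpa using P.sel_finite.union Q.sel_finite) hAB
  simpa only [Set.union_empty] using gtSel_union_iff_of_seqv hi hij hseq hpref hA hB
    Set.finite_empty (fun _ h => h.elim) hsep

/-- A rank-`k` rule penalizing `B` makes `A` win in `Q` (where `A`, `B` tie up to rank `k`)
but not in `P` (where `B` already wins at the lower rank `r.rank`). -/
lemma not_lt_selDiff_of_seqv (hi : 1 ≤ i) (hij : (i : ℕ∞) ≤ j) (hseq : seqv sem i j P Q)
    (hpref : pref sem (P.below i) = pref sem (Q.below i))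
    (hA : A ∈ pref sem (P.below i)) (hB : B ∈ pref sem (P.below i)) {r : Rule U}
    (hr : r ∈ P.sel) (hrank : (r.rank : ℕ∞) = selDiff P.sel A B)
    (hlt : degree B r < degree A r) {k : ℕ} (hik : i ≤ k) (hkj : (k : ℕ∞) ≤ j)
    (hrk : r.rank ≤ k) : ¬ (k : ℕ∞) < selDiff Q.sel A B := by
  intro hkQ
  have hAB : A ≠ B := by
    rintro rfl
    exact lt_irrefl _ hlt
  obtain ⟨φA, φB, hsep⟩ := exists_separating (P.sel_finite.union Q.sel_finite) hAB
  have hk : 1 ≤ k := hi.trans hik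
  set r_B := binRule φB.neg k hk
  have hdA : degree A r_B = 1 := by
    simp [r_B, degree_binRule, hsep.exclusive A hsep.sat_left]
  have hdB : degree B r_B = 2 := by
    simp [r_B, degree_binRule, hsep.sat_right]
  have hdiff : selDiff {r_B} A B = k :=
    selDiff_eq_rank (Set.mem_singleton r_B) (by rw [hdA, hdB]; decide) fun r' hr' hlt' =>
      (lt_irrefl _ (Set.mem_singleton_iff.1 hr' ▸ hlt')).elim
  have hP : ¬ gtSel (P.sel ∪ {r_B}) A B := by
    rw [gtSel_union_iff_of_le (hdiff ▸ hrank ▸ Nat.cast_le.2 hrk)]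
    exact fun ⟨hg, _⟩ => (degree_le_of_gtSel hg hr hrank.le).not_gt hlt
  have hQ : gtSel (Q.sel ∪ {r_B}) A B := by
    rw [gtSel_union_iff_of_lt (hdiff ▸ hkQ)]
    rintro r rfl -
    rw [hdA, hdB]
    decide
  exact hP ((gtSel_union_iff_of_seqv hi hij hseq hpref hA hB (Set.finite_singleton _)
    (by rintro r rfl; exact ⟨hik, hkj⟩) (hsep.union_binRule_neg k hk)).2 hQ)

lemma lt_selDiff_of_seqv (hi : 1 ≤ i) (hij : (i : ℕ∞) ≤ j) (hseq : seqv sem i j P Q)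
    (hpref : pref sem (P.below i) = pref sem (Q.below i))
    (hA : A ∈ pref sem (P.below i)) (hB : B ∈ pref sem (P.below i))
    (hlt : selDiff P.sel A B < selDiff Q.sel A B)
    (hcase : (i : ℕ∞) < selDiff P.sel A B ∨ (i : ℕ∞) < selDiff Q.sel A B) :
    j < selDiff P.sel A B := by
  by_contra! hPj
  obtain ⟨r, hr, hrank, hne⟩ := exists_rank_eq_selDiff hlt.ne_top
  obtain ⟨k, hik, hrk, hkj, hkQ⟩ : ∃ k : ℕ, i ≤ k ∧ r.rank ≤ k ∧ (k : ℕ∞) ≤ j ∧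
      (k : ℕ∞) < selDiff Q.sel A B := by
    rcases le_total i r.rank with h | h
    · exact ⟨r.rank, h, le_rfl, hrank ▸ hPj, hrank ▸ hlt⟩
    · exact ⟨i, le_rfl, h, hij,
        hcase.resolve_left fun h' => (hrank ▸ h').not_ge (Nat.cast_le.2 h)⟩
  rcases hne.lt_or_gt with h | h
  · exact not_lt_selDiff_of_seqv hi hij hseq hpref hB hA hr (hrank.trans selDiff_comm) h
      hik hkj hrk (selDiff_comm ▸ hkQ)
  · exact not_lt_selDiff_of_seqv hi hij hseq hpref hA hB hr hrank h hik hkj hrk hkQ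

lemma selDiff_eq_or_lt_of_seqv (hi : 1 ≤ i) (hij : (i : ℕ∞) ≤ j) (hseq : seqv sem i j P Q)
    (hpref : pref sem (P.below i) = pref sem (Q.below i))
    (hA : A ∈ pref sem (P.below i)) (hB : B ∈ pref sem (P.below i))
    (hcase : (i : ℕ∞) < selDiff P.sel A B ∨ (i : ℕ∞) < selDiff Q.sel A B) :
    selDiff P.sel A B = selDiff Q.sel A B ∨
      (j < selDiff P.sel A B ∧ j < selDiff Q.sel A B) := by
  rcases lt_trichotomy (selDiff P.sel A B) (selDiff Q.sel A B) with h | h | h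
  · have hj := lt_selDiff_of_seqv hi hij hseq hpref hA hB h hcase
    exact Or.inr ⟨hj, hj.trans h⟩
  · exact Or.inl h
  · have hj := lt_selDiff_of_seqv hi hij (seqv_symm hseq) hpref.symm (hpref ▸ hA) (hpref ▸ hB)
      h hcase.symm
    exact Or.inr ⟨hj.trans h, hj⟩

end Necessity

lemma gtSel_union_of_gtSel_union {S S' R : Set (Rule U)} {i : ℕ} {j : ℕ∞} {I J : Set U}
    (hR : inRankInterval i j R) (hgt : gtSel S J I → gtSel S' J I)
    (hS : gtSel S J I → (i : ℕ∞) ≤ selDiff S J I) (hS' : gtSel S' J I → (i : ℕ∞) ≤ selDiff S' J I)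
    (hdiff : (i : ℕ∞) < selDiff S J I ∨ (i : ℕ∞) < selDiff S' J I →
      selDiff S J I = selDiff S' J I ∨ (j < selDiff S J I ∧ j < selDiff S' J I))
    (hg : gtSel (S ∪ R) J I) : gtSel (S' ∪ R) J I := by
  have hRij : selDiff R J I ≠ ⊤ → (i : ℕ∞) ≤ selDiff R J I ∧ selDiff R J I ≤ j := fun h => by
    obtain ⟨r, hr, hrank, -⟩ := exists_rank_eq_selDiff h
    exact hrank ▸ ⟨Nat.cast_le.2 (hR r hr).1, (hR r hr).2⟩
  rcases lt_or_ge (selDiff R J I) (selDiff S J I) with hRS | hSR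
  · have hRS' : selDiff R J I < selDiff S' J I := by
      rcases eq_or_ne (selDiff S J I) (selDiff S' J I) with h | h
      · exact h ▸ hRS
      obtain ⟨hiR, hRj⟩ := hRij hRS.ne_top
      rcases hdiff (Or.inl (hiR.trans_lt hRS)) with h' | ⟨-, h'⟩
      · exact absurd h' h
      · exact hRj.trans_lt h'
    exact (gtSel_union_iff_of_lt hRS').2 ((gtSel_union_iff_of_lt hRS).1 hg)
  · obtain ⟨hgS, hRle⟩ := (gtSel_union_iff_of_le hSR).1 hg
    rcases eq_or_ne (selDiff S J I) (selDiff S' J I) with h | h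
    · exact (gtSel_union_iff_of_le (h ▸ hSR)).2 ⟨hgt hgS, h ▸ hRle⟩
    have hi : (i : ℕ∞) < selDiff S J I ∨ (i : ℕ∞) < selDiff S' J I := by
      rcases (hS hgS).lt_or_eq with h₁ | h₁
      · exact Or.inl h₁
      · exact Or.inr ((hS' (hgt hgS)).lt_of_ne (h₁ ▸ h))
    rcases hdiff hi with h' | ⟨hjS, -⟩
    · exact absurd h' h
    have hRtop : selDiff R J I = ⊤ := by
      by_contra hne
      exact ((hRij hne).2.trans_lt hjS).not_ge hSR
    exact (gtSel_union_iff_of_simSel (selDiff_eq_top_iff.1 hRtop)).2 (hgt hgS)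

lemma seqv_of_pref_below_eq {sem : Sem} {P Q : OptProblem U} {i : ℕ} {j : ℕ∞}
    (hpref : pref sem (P.below i) = pref sem (Q.below i))
    (hgt : ∀ A ∈ pref sem (P.below i), ∀ B ∈ pref sem (P.below i),
      gtSel P.sel A B ↔ gtSel Q.sel A B)
    (hdiff : ∀ A ∈ pref sem (P.below i), ∀ B ∈ pref sem (P.below i),
      (i : ℕ∞) < selDiff P.sel A B ∨ (i : ℕ∞) < selDiff Q.sel A B →
        selDiff P.sel A B = selDiff Q.sel A B ∨
          (j < selDiff P.sel A B ∧ j < selDiff Q.sel A B)) :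
    seqv sem i j P Q := by
  intro R hRg hR
  have hRi : ∀ r ∈ R.sel, i ≤ r.rank := fun r hr => (hR r hr).1
  have hle : ∀ {X : OptProblem U}, pref sem (X.below i) = pref sem (P.below i) →
      ∀ A ∈ pref sem (P.below i), ∀ B ∈ pref sem (P.below i), gtSel X.sel A B →
        (i : ℕ∞) ≤ selDiff X.sel A B := fun hX _ hA _ hB =>
    le_selDiff_of_mem_pref_below rfl (hX ▸ hB) (mem_outcomes_of_mem_pref_below (hX ▸ hA))
  ext I
  rw [mem_pref_union_iff hRg hRi, mem_pref_union_iff hRg hRi, ← hpref]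
  refine and_congr_right fun hI => forall₂_congr fun J hJ => not_congr ⟨?_, ?_⟩
  · exact gtSel_union_of_gtSel_union hR (hgt J hJ I hI).1 (hle rfl J hJ I hI)
      (hle hpref.symm J hJ I hI) (hdiff J hJ I hI)
  · exact gtSel_union_of_gtSel_union hR (hgt J hJ I hI).2 (hle hpref.symm J hJ I hI)
      (hle rfl J hJ I hI) fun h => (hdiff J hJ I hI h.symm).imp Eq.symm And.symm

theorem stmt1_general {U : Type} (sem : Sem) (P Q : OptProblem U)
    (i : ℕ) (j : ℕ∞) (hi : 1 ≤ i) (hij : (i : ℕ∞) ≤ j) :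
    seqv sem i j P Q ↔
      (pref sem (P.below i) = pref sem (Q.below i) ∧
       restrictRel (gtSel P.sel) (pref sem (P.below i)) =
         restrictRel (gtSel Q.sel) (pref sem (Q.below i)) ∧
       (∀ I ∈ pref sem (P.below i), ∀ J ∈ pref sem (P.below i),
         ((i : ℕ∞) < diff P I J ∨ (i : ℕ∞) < diff Q I J) →
           (diff P I J = diff Q I J ∨ (j < diff P I J ∧ j < diff Q I J)))) := by
  simp only [diff_eq_selDiff]
  constructor
  · intro hseq
    have hpref := (pref_below_subset_of_seqv hi hij hseq).antisymm
      (pref_below_subset_of_seqv hi hij (seqv_symm hseq))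
    refine ⟨hpref, ?_, fun I hI J hJ => selDiff_eq_or_lt_of_seqv hi hij hseq hpref hI hJ⟩
    rw [← hpref]
    funext A B
    exact propext (and_congr_left fun ⟨hA, hB⟩ => gtSel_iff_gtSel_of_seqv hi hij hseq hpref hA hB)
  · rintro ⟨hpref, hrel, hdiff⟩
    refine seqv_of_pref_below_eq hpref (fun A hA B hB => ?_) hdiff
    simpa [restrictRel, ← hpref, hA, hB] using congrFun (congrFun hrel A) B

/-- Theorem 2: characterization of strong sel-equivalence
`P ≡^{s,[i,j]} Q` for ranked optimization problems. -/
theorem stmt1 {U : Type} [Countable U] (sem : Sem) (P Q : OptProblem U)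
    (i : ℕ) (j : ℕ∞) (hi : 1 ≤ i) (hij : (i : ℕ∞) ≤ j) :
    seqv sem i j P Q ↔
      (pref sem (P.below i) = pref sem (Q.below i) ∧
       restrictRel (gtSel P.sel) (pref sem (P.below i)) =
         restrictRel (gtSel Q.sel) (pref sem (Q.below i)) ∧
       (∀ I ∈ pref sem (P.below i), ∀ J ∈ pref sem (P.below i),
         ((i : ℕ∞) < diff P I J ∨ (i : ℕ∞) < diff Q I J) →
           (diff P I J = diff Q I J ∨ (j < diff P I J ∧ j < diff Q I J)))) :=
  stmt1_general sem P Q i j hi hij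
end

section
/- Let P and Q be ranked optimization problems (both interpreted as CO problems or both interpreted as ASO problems) and let k be the maximum rank of a preference rule occurring in P^s ∪ Q^s. Then P ≡^{s,≥k} Q if and only if P ≡^{s,=k} Q. -/
open scoped Classical

variable {U : Type}

/-- Rerank a rule to rank `k`. -/
def rerank (r : Rule U) (k : ℕ) (hk : 1 ≤ k) : Rule U :=
  ⟨r.head, r.body, k, r.head_ne, hk⟩

lemma degree_rerank (I : Set U) (r : Rule U) (k : ℕ) (hk : 1 ≤ k) :
    degree I (rerank r k hk) = degree I r := rfl

/-- Decomposition of `gtSel` over a union split by rank. -/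
lemma gtSel_union_split (S B : Set (Rule U)) (k : ℕ)
    (hS : ∀ r ∈ S, r.rank ≤ k) (hB : ∀ r ∈ B, k < r.rank) (J I : Set U) :
    gtSel (S ∪ B) J I ↔ gtSel S J I ∨ (simSel S J I ∧ gtSel B J I) := by
  constructor
  · rintro ⟨r', hr', hlt, hsame, hlow⟩
    rcases hr' with hr' | hr'
    · exact Or.inl ⟨r', hr', hlt, fun r hr => hsame r (Or.inl hr),
        fun r hr => hlow r (Or.inl hr)⟩
    · refine Or.inr ⟨fun r hr => hlow r (Or.inl hr)
        (lt_of_le_of_lt (hS r hr) (hB r' hr')),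
        r', hr', hlt, fun r hr => hsame r (Or.inr hr), fun r hr => hlow r (Or.inr hr)⟩
  · rintro (⟨r', hr', hlt, hsame, hlow⟩ | ⟨hsim, r', hr', hlt, hsame, hlow⟩)
    · refine ⟨r', Or.inl hr', hlt, ?_, ?_⟩
      · rintro r (hr | hr) he
        · exact hsame r hr he
        · exact absurd he (by have := hB r hr; have := hS r' hr'; omega)
      · rintro r (hr | hr) he
        · exact hlow r hr he
        · exact absurd he (by have := hB r hr; have := hS r' hr'; omega)
    · refine ⟨r', Or.inr hr', hlt, ?_, ?_⟩
      · rintro r (hr | hr) he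
        · exact absurd he (by have := hS r hr; have := hB r' hr'; omega)
        · exact hsame r hr he
      · rintro r (hr | hr) he
        · exact hsim r hr
        · exact hlow r hr he

lemma mem_pref_union (sem : Sem) (P R : OptProblem U) (hg : R.gen = ∅) (I : Set U) :
    I ∈ pref sem (P.union R) ↔
      I ∈ outcomes sem P ∧ ¬ ∃ J ∈ outcomes sem P, gtSel (P.sel ∪ R.sel) J I := by
  have h : outcomes sem (P.union R) = outcomes sem P := by
    cases sem <;> simp [outcomes, OptProblem.union, hg]
  simp only [pref, Set.mem_setOf_eq, h]
  exact Iff.rfl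

lemma key_incl {U : Type} (sem : Sem) (P Q : OptProblem U) (k : ℕ) (hk : 1 ≤ k)
    (hPmax : ∀ r ∈ P.sel, r.rank ≤ k) (hQmax : ∀ r ∈ Q.sel, r.rank ≤ k)
    (E : seqv sem k (k : ℕ∞) P Q)
    (R : OptProblem U) (hg : R.gen = ∅) (hR : inRankInterval k ⊤ R.sel) :
    pref sem (P.union R) ⊆ pref sem (Q.union R) := by
  intro I hI
  set A : Set (Rule U) := {r ∈ R.sel | r.rank ≤ k} with hAdef
  set B : Set (Rule U) := {r ∈ R.sel | k < r.rank} with hBdef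
  have hAk : ∀ r ∈ A, r.rank = k := fun r hr => le_antisymm hr.2 (hR r hr.1).1
  have hBsub : B ⊆ R.sel := fun r hr => hr.1
  have hsplitP : P.sel ∪ R.sel = (P.sel ∪ A) ∪ B := by
    ext r
    constructor
    · rintro (h | h)
      · exact Or.inl (Or.inl h)
      · rcases le_or_gt r.rank k with h' | h'
        · exact Or.inl (Or.inr ⟨h, h'⟩)
        · exact Or.inr ⟨h, h'⟩
    · rintro ((h | h) | h)
      · exact Or.inl h
      · exact Or.inr h.1
      · exact Or.inr h.1
  have hsplitQ : Q.sel ∪ R.sel = (Q.sel ∪ A) ∪ B := by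
    ext r
    constructor
    · rintro (h | h)
      · exact Or.inl (Or.inl h)
      · rcases le_or_gt r.rank k with h' | h'
        · exact Or.inl (Or.inr ⟨h, h'⟩)
        · exact Or.inr ⟨h, h'⟩
    · rintro ((h | h) | h)
      · exact Or.inl h
      · exact Or.inr h.1
      · exact Or.inr h.1
  have hSP : ∀ r ∈ P.sel ∪ A, r.rank ≤ k := by
    rintro r (h | h)
    · exact hPmax r h
    · exact h.2
  have hSQ : ∀ r ∈ Q.sel ∪ A, r.rank ≤ k := by
    rintro r (h | h)
    · exact hQmax r h
    · exact h.2
  have hBk : ∀ r ∈ B, k < r.rank := fun r hr => hr.2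
  have hAfin : A.Finite := R.sel_finite.subset fun r hr => hr.1
  set RA : OptProblem U := ⟨∅, A, hAfin⟩ with hRAdef
  rw [mem_pref_union sem P R hg] at hI
  obtain ⟨hIP, hIno⟩ := hI
  -- Step 1: I is preferred in P ∪ A, hence in Q ∪ A
  have hIPA : I ∈ pref sem (P.union RA) := by
    rw [mem_pref_union sem P RA rfl]
    refine ⟨hIP, ?_⟩
    rintro ⟨J, hJ, hgt⟩
    exact hIno ⟨J, hJ, by
      rw [hsplitP]
      exact (gtSel_union_split _ _ k hSP hBk J I).2 (Or.inl hgt)⟩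
  have hEA : pref sem (P.union RA) = pref sem (Q.union RA) :=
    E RA rfl (fun r hr => ⟨(hAk r hr).ge, by rw [hAk r hr]⟩)
  have hIQA : I ∈ pref sem (Q.union RA) := hEA ▸ hIPA
  rw [mem_pref_union sem Q RA rfl] at hIQA
  obtain ⟨hIQ, hIQno⟩ := hIQA
  -- Step 2: no J can beat I via the rules of rank > k
  have hstep2 : ∀ J ∈ outcomes sem Q, ¬ (simSel (Q.sel ∪ A) J I ∧ gtSel B J I) := by
    rintro J hJ ⟨hsim, r', hr'B, hlt, hsameB, hlowB⟩
    set m := r'.rank with hmdef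
    have hkm : k < m := hBk r' hr'B
    set TS : Set (Rule U) := (fun s => rerank s k hk) '' {s ∈ R.sel | s.rank ≤ m} with hTSdef
    have hTSfin : TS.Finite := (R.sel_finite.subset fun s hs => hs.1).image _
    set T : OptProblem U := ⟨∅, TS, hTSfin⟩ with hTdef
    have hTrank : ∀ r ∈ TS, r.rank = k := by rintro r ⟨s, hs, rfl⟩; rfl
    have hET : pref sem (P.union T) = pref sem (Q.union T) :=
      E T rfl (fun r hr => ⟨(hTrank r hr).ge, by rw [hTrank r hr]⟩)
    -- Claim 2: I is preferred in P ∪ T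
    have hIPT : I ∈ pref sem (P.union T) := by
      rw [mem_pref_union sem P T rfl]
      refine ⟨hIP, ?_⟩
      rintro ⟨J', hJ', w, hw, hwlt, hwsame, hwlow⟩
      apply hIno
      refine ⟨J', hJ', ?_⟩
      rw [hsplitP]
      apply (gtSel_union_split _ _ k hSP hBk J' I).2
      have hwk : w.rank ≤ k := by
        rcases hw with hw | hw
        · exact hPmax w hw
        · exact (hTrank w hw).le
      rcases lt_or_eq_of_le hwk with hwk | hwk
      · -- witness of rank < k : it is a P-rule, beats within P ∪ A already
        have hwP : w ∈ P.sel := by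
          rcases hw with hw | hw
          · exact hw
          · exact absurd (hTrank w hw) (by omega)
        refine Or.inl ⟨w, Or.inl hwP, hwlt, ?_, ?_⟩
        · rintro r (hr | hr) he
          · exact hwsame r (Or.inl hr) he
          · exact absurd he (by have := hAk r hr; omega)
        · rintro r (hr | hr) he
          · exact hwlow r (Or.inl hr) he
          · exact absurd he (by have := hAk r hr; omega)
      · -- witness of rank k
        have hTle : ∀ s ∈ R.sel, s.rank ≤ m → degree J' s ≤ degree I s := by
          intro s hs hsm
          have := hwsame (rerank s k hk) (Or.inr ⟨s, ⟨hs, hsm⟩, rfl⟩) hwk.symm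
          rwa [degree_rerank, degree_rerank] at this
        have hPAle : ∀ r ∈ P.sel ∪ A, r.rank = k → degree J' r ≤ degree I r := by
          rintro r (hr | hr) he
          · exact hwsame r (Or.inl hr) (by omega)
          · exact hTle r hr.1 (by omega)
        have hPlow : ∀ r ∈ P.sel, r.rank < k → degree J' r = degree I r := by
          intro r hr he
          exact hwlow r (Or.inl hr) (by omega)
        by_cases hcase : ∃ p ∈ P.sel ∪ A, p.rank = k ∧ degree J' p < degree I p
        · obtain ⟨p, hp, hpk, hplt⟩ := hcase
          refine Or.inl ⟨p, hp, hplt, ?_, ?_⟩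
          · intro r hr he
            exact hPAle r hr (by omega)
          · rintro r (hr | hr) he
            · exact hPlow r hr (by omega)
            · exact absurd he (by have := hAk r hr; omega)
        · push_neg at hcase
          have hsimPA : simSel (P.sel ∪ A) J' I := by
            intro r hr
            rcases lt_or_eq_of_le (hSP r hr) with h' | h'
            · rcases hr with hr | hr
              · exact hPlow r hr h'
              · exact absurd (hAk r hr) (by omega)
            · exact le_antisymm (hPAle r hr h') (hcase r hr h')
          -- the witness must come from a reranked B-rule
          have hwit : ∃ s ∈ B, s.rank ≤ m ∧ degree J' s < degree I s := by
            rcases hw with hw | hw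
            · exact absurd hwlt (not_lt.2 (hcase w (Or.inl hw) hwk))
            · obtain ⟨s, hs, rfl⟩ := hw
              have hslt : degree J' s < degree I s := by
                rwa [degree_rerank, degree_rerank] at hwlt
              rcases le_or_gt s.rank k with h' | h'
              · exact absurd hslt
                  (not_lt.2 (hcase s (Or.inr ⟨hs.1, h'⟩) (le_antisymm h' (hR s hs.1).1)))
              · exact ⟨s, ⟨hs.1, h'⟩, hs.2, hslt⟩
          obtain ⟨s, hsB, hsm, hslt⟩ := hwit
          set N : Set ℕ := {n | ∃ b ∈ B, b.rank = n ∧ n ≤ m ∧ degree J' b < degree I b}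
            with hNdef
          have hNne : N.Nonempty := ⟨s.rank, s, hsB, rfl, hsm, hslt⟩
          obtain ⟨b0, hb0B, hb0r, hb0m, hb0lt⟩ := Nat.sInf_mem hNne
          refine Or.inr ⟨hsimPA, b0, hb0B, hb0lt, ?_, ?_⟩
          · intro r hr he
            exact hTle r (hBsub hr) (by omega)
          · intro r hr he
            have hrm : r.rank ≤ m := by omega
            have hle := hTle r (hBsub hr) hrm
            rcases lt_or_eq_of_le hle with h' | h'
            · have hrN : r.rank ∈ N := ⟨r, hr, rfl, hrm, h'⟩
              exact absurd (Nat.sInf_le hrN) (by omega)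
            · exact h'
    -- but J beats I in Q ∪ T : contradiction
    rw [hET, mem_pref_union sem Q T rfl] at hIPT
    apply hIPT.2
    refine ⟨J, hJ, rerank r' k hk, Or.inr ⟨r', ⟨hBsub hr'B, le_refl m⟩, rfl⟩, ?_, ?_, ?_⟩
    · rwa [degree_rerank, degree_rerank]
    · rintro r (hr | hr) he
      · exact (hsim r (Or.inl hr)).le
      · obtain ⟨s, hs, rfl⟩ := hr
        rw [degree_rerank, degree_rerank]
        rcases le_or_gt s.rank k with h' | h'
        · exact (hsim s (Or.inr ⟨hs.1, h'⟩)).le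
        · rcases lt_or_eq_of_le hs.2 with h'' | h''
          · exact (hlowB s ⟨hs.1, h'⟩ h'').le
          · exact hsameB s ⟨hs.1, h'⟩ h''
    · rintro r (hr | hr) he
      · exact hsim r (Or.inl hr)
      · exact absurd (hTrank r hr) (by
          have : (rerank r' k hk).rank = k := rfl
          omega)
  -- Assemble
  rw [mem_pref_union sem Q R hg]
  refine ⟨hIQ, ?_⟩
  rintro ⟨J, hJ, hgt⟩
  rw [hsplitQ] at hgt
  rcases (gtSel_union_split _ _ k hSQ hBk J I).1 hgt with h | ⟨h1, h2⟩
  · exact hIQno ⟨J, hJ, h⟩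
  · exact hstep2 J hJ ⟨h1, h2⟩

/-- Corollary 6: if `k` is the maximum rank of a rule in `P^s ∪ Q^s`,
then `P ≡^{s,≥k} Q` iff `P ≡^{s,=k} Q`. -/
theorem stmt5 {U : Type} [Countable U] (sem : Sem) (P Q : OptProblem U) (k : ℕ)
    (hmax : ∀ r ∈ P.sel ∪ Q.sel, r.rank ≤ k)
    (hmem : ∃ r ∈ P.sel ∪ Q.sel, r.rank = k) :
    seqv sem k ⊤ P Q ↔ seqv sem k (k : ℕ∞) P Q := by
  obtain ⟨r0, hr0, hr0k⟩ := hmem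
  have hk : 1 ≤ k := hr0k ▸ r0.rank_pos
  have hPmax : ∀ r ∈ P.sel, r.rank ≤ k := fun r hr => hmax r (Or.inl hr)
  have hQmax : ∀ r ∈ Q.sel, r.rank ≤ k := fun r hr => hmax r (Or.inr hr)
  constructor
  · intro h R hg hRk
    exact h R hg fun r hr => ⟨(hRk r hr).1, le_top⟩
  · intro E R hg hRk
    apply Set.Subset.antisymm
    · exact key_incl sem P Q k hk hPmax hQmax E R hg hRk
    · exact key_incl sem Q P k hk hQmax hPmax (fun R' h1 h2 => (E R' h1 h2).symm) R hg hRk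
end

section
/- Let P and Q be ranked optimization problems (both interpreted as CO problems or both interpreted as ASO problems) and let k be the maximum rank of a preference rule occurring in P^s ∪ Q^s. Then P ≡^{s,≥k+1} Q if and only if π(P) = π(Q) and (≈^P)_{π(P)} = (≈^Q)_{π(Q)}. -/
open scoped Classical

variable {U : Type}

/- ======================= auxiliary lemmas ======================= -/

lemma nat_sInf_le_iff {S : Set ℕ} (hne : S.Nonempty) (d : ℕ) :
    sInf S ≤ d ↔ ∃ m ∈ S, m ≤ d := by
  constructor
  · intro h; exact ⟨sInf S, Nat.sInf_mem hne, h⟩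
  · rintro ⟨m, hm, hmd⟩; exact le_trans (Nat.sInf_le hm) hmd

lemma gt_of_sim (S : Set (Rule U)) (J I K : Set U)
    (h : simSel S J I) (hg : gtSel S K J) : gtSel S K I := by
  obtain ⟨r', hr', hlt, heq, hlow⟩ := hg
  exact ⟨r', hr', by rw [← h r' hr']; exact hlt,
    fun r hr h2 => by rw [← h r hr]; exact heq r hr h2,
    fun r hr h2 => by rw [← h r hr]; exact hlow r hr h2⟩

lemma gt_union_split (S T : Set (Rule U)) (k : ℕ)
    (hS : ∀ r ∈ S, r.rank ≤ k) (hT : ∀ r ∈ T, k + 1 ≤ r.rank) (J I : Set U) :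
    gtSel (S ∪ T) J I ↔ gtSel S J I ∨ (simSel S J I ∧ gtSel T J I) := by
  constructor
  · rintro ⟨r', hr', hlt, heq, hlow⟩
    rcases hr' with hr'S | hr'T
    · exact Or.inl ⟨r', hr'S, hlt, fun r hr h => heq r (Or.inl hr) h,
        fun r hr h => hlow r (Or.inl hr) h⟩
    · refine Or.inr ⟨?_, r', hr'T, hlt, fun r hr h => heq r (Or.inr hr) h,
        fun r hr h => hlow r (Or.inr hr) h⟩
      intro r hr
      exact hlow r (Or.inl hr) (by have := hS r hr; have := hT r' hr'T; omega)
  · rintro (⟨r', hr'S, hlt, heq, hlow⟩ | ⟨hsim, r', hr'T, hlt, heq, hlow⟩)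
    · refine ⟨r', Or.inl hr'S, hlt, ?_, ?_⟩
      · rintro r (hr | hr) h
        · exact heq r hr h
        · exact absurd h (by have := hS r' hr'S; have := hT r hr; omega)
      · rintro r (hr | hr) h
        · exact hlow r hr h
        · exact absurd h (by have := hS r' hr'S; have := hT r hr; omega)
    · refine ⟨r', Or.inr hr'T, hlt, ?_, ?_⟩
      · rintro r (hr | hr) h
        · exact absurd h (by have := hS r hr; have := hT r' hr'T; omega)
        · exact heq r hr h
      · rintro r (hr | hr) h
        · exact hsim r hr
        · exact hlow r hr h

/-- Characterization of preferred outcomes of `P ∪ R` when `R` has empty generator and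
all its rules have rank above all ranks of `P`. -/
lemma pref_union_char (sem : Sem) (P R : OptProblem U) (k : ℕ)
    (hP : ∀ r ∈ P.sel, r.rank ≤ k) (hRg : R.gen = ∅)
    (hR : ∀ r ∈ R.sel, k + 1 ≤ r.rank) :
    pref sem (P.union R) = {I | I ∈ pref sem P ∧
      ¬ ∃ J, restrictRel (simSel P.sel) (pref sem P) J I ∧ gtSel R.sel J I} := by
  have hgen : (P.union R).gen = P.gen := by
    show P.gen ∪ R.gen = P.gen
    rw [hRg, Set.union_empty]
  have hout : outcomes sem (P.union R) = outcomes sem P := by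
    cases sem <;> simp only [outcomes, hgen]
  have hsplit : ∀ J I : Set U, gtSel (P.union R).sel J I ↔
      gtSel P.sel J I ∨ (simSel P.sel J I ∧ gtSel R.sel J I) :=
    fun J I => gt_union_split P.sel R.sel k hP hR J I
  ext I
  simp only [pref, restrictRel, Set.mem_setOf_eq, hout]
  constructor
  · rintro ⟨hIo, hno⟩
    have hIp : I ∈ outcomes sem P ∧ ¬∃ J ∈ outcomes sem P, gtSel P.sel J I :=
      ⟨hIo, fun ⟨J, hJo, hg⟩ => hno ⟨J, hJo, (hsplit J I).mpr (Or.inl hg)⟩⟩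
    refine ⟨hIp, ?_⟩
    rintro ⟨J, ⟨hsim, hJp, _⟩, hgR⟩
    exact hno ⟨J, hJp.1, (hsplit J I).mpr (Or.inr ⟨hsim, hgR⟩)⟩
  · rintro ⟨⟨hIo, hnoP⟩, hnoR⟩
    refine ⟨hIo, ?_⟩
    rintro ⟨J, hJo, hg⟩
    rcases (hsplit J I).mp hg with hgP | ⟨hsim, hgR⟩
    · exact hnoP ⟨J, hJo, hgP⟩
    · have hJpref : J ∈ outcomes sem P ∧ ¬∃ K ∈ outcomes sem P, gtSel P.sel K J :=
        ⟨hJo, fun ⟨K, hKo, hgK⟩ => hnoP ⟨K, hKo, gt_of_sim P.sel J I K hsim hgK⟩⟩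
      exact hnoR ⟨J, ⟨hsim, hJpref, ⟨hIo, hnoP⟩⟩, hgR⟩

/- ======= formulas used to build separating contexts ======= -/

def Formula.neg_s6 (φ : Formula U) : Formula U := .imp φ .bot

def Formula.top_s6 : Formula U := Formula.neg_s6 .bot

def bigOr : List (Formula U) → Formula U
  | [] => .bot
  | φ :: l => .disj φ (bigOr l)

lemma sat_bigOr (I : Set U) (l : List (Formula U)) :
    Sat I (bigOr l) ↔ ∃ φ ∈ l, Sat I φ := by
  induction l with
  | nil => simp [bigOr, Sat]
  | cons φ l ih => simp [bigOr, Sat, ih]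

lemma sat_top (I : Set U) : Sat I Formula.top_s6 := fun h => h

lemma sat_neg (I : Set U) (φ : Formula U) : Sat I (Formula.neg_s6 φ) ↔ ¬ Sat I φ := Iff.rfl

lemma degree_pos (I : Set U) (q : Rule U) : 1 ≤ degree I q := by
  rw [degree]
  split_ifs with h
  · have hne : {n : ℕ | ∃ k : Fin q.head.length, n = k.1 + 1 ∧ Sat I (q.head.get k)}.Nonempty := by
      obtain ⟨φ, hφ, hsat⟩ := h.2
      obtain ⟨kk, hkk⟩ := List.mem_iff_get.mp hφ
      exact ⟨kk.1 + 1, kk, rfl, hkk ▸ hsat⟩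
    have := Nat.sInf_mem hne
    obtain ⟨kk, hk, -⟩ := this
    omega
  · exact le_refl 1

/-- `leFormula q d` classically expresses `degree · q ≤ d` for `d ≥ 1`. -/
def leFormula (q : Rule U) (d : ℕ) : Formula U :=
  .disj (Formula.neg_s6 (.conj q.body (bigOr q.head))) (bigOr (q.head.take d))

lemma sat_leFormula (q : Rule U) (d : ℕ) (hd : 1 ≤ d) (I : Set U) :
    Sat I (leFormula q d) ↔ degree I q ≤ d := by
  by_cases T : Sat I q.body ∧ ∃ φ ∈ q.head, Sat I φ
  · have hdeg : degree I q =
        sInf {n : ℕ | ∃ k : Fin q.head.length, n = k.1 + 1 ∧ Sat I (q.head.get k)} := by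
      rw [degree, if_pos T]
    have hne : {n : ℕ | ∃ k : Fin q.head.length, n = k.1 + 1 ∧ Sat I (q.head.get k)}.Nonempty := by
      obtain ⟨φ, hφ, hsat⟩ := T.2
      obtain ⟨kk, hkk⟩ := List.mem_iff_get.mp hφ
      exact ⟨kk.1 + 1, kk, rfl, hkk ▸ hsat⟩
    rw [hdeg, nat_sInf_le_iff hne]
    simp only [leFormula, Sat, sat_bigOr, Formula.neg_s6]
    constructor
    · rintro (h | ⟨φ, hφ, hsat⟩)
      · exact absurd T h
      rw [List.mem_take_iff_getElem] at hφ
      obtain ⟨i, hm, hi⟩ := hφ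
      have hiL : i < q.head.length := lt_of_lt_of_le hm (min_le_right _ _)
      refine ⟨i + 1, ⟨⟨i, hiL⟩, rfl, ?_⟩, ?_⟩
      · have : q.head.get ⟨i, hiL⟩ = φ := by
          rw [List.get_eq_getElem]; exact hi
        rw [this]; exact hsat
      · have : i < d := lt_of_lt_of_le hm (min_le_left _ _)
        omega
    · rintro ⟨m, ⟨kk, rfl, hsat⟩, hmd⟩
      refine Or.inr ⟨q.head.get kk, ?_, hsat⟩
      rw [List.mem_take_iff_getElem]
      refine ⟨kk.1, lt_min (by omega) kk.2, ?_⟩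
      rw [List.get_eq_getElem]
  · have hdeg : degree I q = 1 := by rw [degree, if_neg T]
    rw [hdeg]
    simp only [leFormula, Sat, sat_bigOr, Formula.neg_s6]
    constructor
    · intro _; exact hd
    · intro _
      exact Or.inl T

/-- The context rule `α > ¬α ←^{n} ⊤`. -/
def pairRule (α : Formula U) (n : ℕ) (h2 : 1 ≤ n) : Rule U :=
  ⟨[α, Formula.neg_s6 α], Formula.top_s6, n, by simp, h2⟩

lemma degree_pairRule (α : Formula U) (n : ℕ) (h2 : 1 ≤ n) (I : Set U) :
    degree I (pairRule α n h2) = if Sat I α then 1 else 2 := by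
  have hT : Sat I (pairRule α n h2).body ∧ ∃ φ ∈ (pairRule α n h2).head, Sat I φ := by
    refine ⟨sat_top I, ?_⟩
    by_cases c : Sat I α
    · exact ⟨α, by simp [pairRule], c⟩
    · exact ⟨Formula.neg_s6 α, by simp [pairRule], c⟩
  rw [degree, if_pos hT]
  have hS : ∀ m : ℕ,
      (∃ kk : Fin (pairRule α n h2).head.length,
        m = kk.1 + 1 ∧ Sat I ((pairRule α n h2).head.get kk)) ↔
      ((m = 1 ∧ Sat I α) ∨ (m = 2 ∧ ¬ Sat I α)) := by
    intro m
    constructor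
    · rintro ⟨kk, rfl, hk⟩
      match kk with
      | ⟨0, _⟩ => exact Or.inl ⟨rfl, hk⟩
      | ⟨1, _⟩ => exact Or.inr ⟨rfl, hk⟩
    · rintro (⟨rfl, hs⟩ | ⟨rfl, hs⟩)
      · exact ⟨⟨0, by simp [pairRule]⟩, rfl, hs⟩
      · exact ⟨⟨1, by simp [pairRule]⟩, rfl, hs⟩
  by_cases c : Sat I α
  · have hset : {m : ℕ | ∃ kk : Fin (pairRule α n h2).head.length,
        m = kk.1 + 1 ∧ Sat I ((pairRule α n h2).head.get kk)} = {1} := by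
      ext m; rw [Set.mem_setOf_eq, hS m]; simp [c]
    rw [hset, csInf_singleton, if_pos c]
  · have hset : {m : ℕ | ∃ kk : Fin (pairRule α n h2).head.length,
        m = kk.1 + 1 ∧ Sat I ((pairRule α n h2).head.get kk)} = {2} := by
      ext m; rw [Set.mem_setOf_eq, hS m]; simp [c]
    rw [hset, csInf_singleton, if_neg c]

lemma gtSel_singleton (r : Rule U) (J I : Set U) :
    gtSel {r} J I ↔ degree J r < degree I r := by
  constructor
  · rintro ⟨r', hr', hlt, -, -⟩
    rw [Set.mem_singleton_iff] at hr'; subst hr'; exact hlt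
  · intro h
    refine ⟨r, rfl, h, ?_, ?_⟩
    · rintro r'' hr'' -
      rw [Set.mem_singleton_iff] at hr''; subst hr''; exact le_of_lt h
    · rintro r'' hr'' hlt'
      rw [Set.mem_singleton_iff] at hr''; subst hr''; exact absurd hlt' (lt_irrefl _)

/-- Core separation argument. -/
lemma sep_core (sem : Sem) (P Q : OptProblem U) (k : ℕ)
    (hP : ∀ r ∈ P.sel, r.rank ≤ k) (hQ : ∀ r ∈ Q.sel, r.rank ≤ k)
    (hseq : ∀ R : OptProblem U, R.gen = ∅ → inRankInterval (k + 1) ⊤ R.sel →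
      pref sem (P.union R) = pref sem (Q.union R))
    (hV : pref sem P = pref sem Q)
    (A B : Set U) (hA : A ∈ pref sem P) (hB : B ∈ pref sem P)
    (hsimP : simSel P.sel A B) (q : Rule U) (hq : q ∈ Q.sel)
    (hlt : degree A q < degree B q) : False := by
  have hd1 : 1 ≤ degree A q := degree_pos A q
  set α := leFormula q (degree A q) with hα
  have hSatA : Sat A α := (sat_leFormula q (degree A q) hd1 A).mpr le_rfl
  have hSatB : ¬ Sat B α := fun h => by
    have := (sat_leFormula q (degree A q) hd1 B).mp h; omega
  set r : Rule U := pairRule α (k + 1) (by omega) with hr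
  set R : OptProblem U := ⟨∅, {r}, Set.finite_singleton r⟩ with hR
  have hRsel : ∀ r' ∈ R.sel, k + 1 ≤ r'.rank := by
    intro r' hr'
    rw [Set.mem_singleton_iff] at hr'; subst hr'; exact le_refl _
  have h := hseq R rfl (by
    intro r' hr'
    rw [Set.mem_singleton_iff] at hr'; subst hr'
    exact ⟨le_refl _, le_top⟩)
  rw [pref_union_char sem P R k hP rfl hRsel,
      pref_union_char sem Q R k hQ rfl hRsel] at h
  have hdegA : degree A r = 1 := by rw [hr, degree_pairRule, if_pos hSatA]
  have hdegB : degree B r = 2 := by rw [hr, degree_pairRule, if_neg hSatB]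
  have hBQ : B ∈ {I | I ∈ pref sem Q ∧
      ¬ ∃ J, restrictRel (simSel Q.sel) (pref sem Q) J I ∧ gtSel R.sel J I} := by
    refine ⟨hV ▸ hB, ?_⟩
    rintro ⟨J, ⟨hsimJ, hJp, hBp⟩, hgt⟩
    have hdJ : degree J q = degree B q := hsimJ q hq
    have hnSatJ : ¬ Sat J α := fun hs => by
      have := (sat_leFormula q (degree A q) hd1 J).mp hs; omega
    have hdegJ : degree J r = 2 := by rw [hr, degree_pairRule, if_neg hnSatJ]
    have hgt' : degree J r < degree B r := (gtSel_singleton r J B).mp hgt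
    omega
  rw [← h] at hBQ
  obtain ⟨-, hno⟩ := hBQ
  exact hno ⟨A, ⟨hsimP, hA, hB⟩,
    (gtSel_singleton r A B).mpr (by omega)⟩


/-- Corollary 7: if `k` is the maximum rank of a rule in `P^s ∪ Q^s`, then
`P ≡^{s,≥k+1} Q` iff `π(P) = π(Q)` and `(≈^P)_{π(P)} = (≈^Q)_{π(Q)}`. -/
theorem stmt6 {U : Type} [Countable U] (sem : Sem) (P Q : OptProblem U) (k : ℕ)
    (hmax : ∀ r ∈ P.sel ∪ Q.sel, r.rank ≤ k)
    (hmem : ∃ r ∈ P.sel ∪ Q.sel, r.rank = k) :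
    seqv sem (k + 1) ⊤ P Q ↔
      (pref sem P = pref sem Q ∧
       restrictRel (simSel P.sel) (pref sem P) =
         restrictRel (simSel Q.sel) (pref sem Q)) := by
  constructor
  · intro hseq
    have hP : ∀ r ∈ P.sel, r.rank ≤ k := fun r hr => hmax r (Or.inl hr)
    have hQ : ∀ r ∈ Q.sel, r.rank ≤ k := fun r hr => hmax r (Or.inr hr)
    have hempty : ∀ r' ∈ ((⟨∅, ∅, Set.finite_empty⟩ : OptProblem U)).sel, k + 1 ≤ r'.rank :=
      fun r' hr' => absurd hr' (Set.notMem_empty r')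
    have h0 := hseq ⟨∅, ∅, Set.finite_empty⟩ rfl
      (fun r' hr' => absurd hr' (Set.notMem_empty r'))
    rw [pref_union_char sem P _ k hP rfl hempty,
        pref_union_char sem Q _ k hQ rfl hempty] at h0
    have hV : pref sem P = pref sem Q := by
      ext I
      have := Set.ext_iff.mp h0 I
      simpa [gtSel] using this
    refine ⟨hV, ?_⟩
    by_contra hne
    obtain ⟨A, hA⟩ := Function.ne_iff.mp hne
    obtain ⟨B, hAB⟩ := Function.ne_iff.mp hA
    by_cases h1 : restrictRel (simSel P.sel) (pref sem P) A B
    · have h2 : ¬ restrictRel (simSel Q.sel) (pref sem Q) A B :=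
        fun h => hAB (propext ⟨fun _ => h, fun _ => h1⟩)
      obtain ⟨hsimP, hAp, hBp⟩ := h1
      have hnsimQ : ¬ simSel Q.sel A B := fun hs => h2 ⟨hs, hV ▸ hAp, hV ▸ hBp⟩
      have hex : ∃ q ∈ Q.sel, degree A q ≠ degree B q := by
        by_contra hq; push_neg at hq; exact hnsimQ hq
      obtain ⟨q, hq, hne'⟩ := hex
      rcases lt_or_gt_of_ne hne' with hlt | hgt
      · exact sep_core sem P Q k hP hQ hseq hV A B hAp hBp hsimP q hq hlt
      · exact sep_core sem P Q k hP hQ hseq hV B A hBp hAp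
          (fun r hr => (hsimP r hr).symm) q hq hgt
    · have h2 : restrictRel (simSel Q.sel) (pref sem Q) A B := by
        by_contra h2
        exact hAB (propext ⟨fun h => absurd h h1, fun h => absurd h h2⟩)
      obtain ⟨hsimQ, hAq, hBq⟩ := h2
      have hnsimP : ¬ simSel P.sel A B := fun hs => h1 ⟨hs, hV.symm ▸ hAq, hV.symm ▸ hBq⟩
      have hseq' : ∀ R : OptProblem U, R.gen = ∅ → inRankInterval (k + 1) ⊤ R.sel →
          pref sem (Q.union R) = pref sem (P.union R) :=
        fun R h hint => (hseq R h hint).symm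
      have hex : ∃ p ∈ P.sel, degree A p ≠ degree B p := by
        by_contra hp; push_neg at hp; exact hnsimP hp
      obtain ⟨p, hp, hne'⟩ := hex
      rcases lt_or_gt_of_ne hne' with hlt | hgt
      · exact sep_core sem Q P k hQ hP hseq' hV.symm A B hAq hBq hsimQ p hp hlt
      · exact sep_core sem Q P k hQ hP hseq' hV.symm B A hBq hAq
          (fun r hr => (hsimQ r hr).symm) p hp hgt
  · rintro ⟨hV, hrel⟩ R hRg hRint
    have hP : ∀ r ∈ P.sel, r.rank ≤ k := fun r hr => hmax r (Or.inl hr)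
    have hQ : ∀ r ∈ Q.sel, r.rank ≤ k := fun r hr => hmax r (Or.inr hr)
    have hRsel : ∀ r ∈ R.sel, k + 1 ≤ r.rank := fun r hr => (hRint r hr).1
    rw [pref_union_char sem P R k hP hRg hRsel,
        pref_union_char sem Q R k hQ hRg hRsel, hrel, hV]
end

section
/- For all CO problems P and Q, P ≡_g Q if and only if Mod(P^g) = Mod(Q^g) and (>^P)_{Mod(P^g)} = (>^Q)_{Mod(Q^g)}. -/
open scoped Classical

variable {U : Type}

private lemma gtSel_irrefl (S : Set (Rule U)) (I : Set U) : ¬ gtSel S I I := by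
  rintro ⟨r, _, hlt, _, _⟩
  exact lt_irrefl _ hlt

private lemma models_union' (S T : Set (Formula U)) :
    models (S ∪ T) = models S ∩ models T := by
  ext I
  constructor
  · intro h
    exact ⟨fun φ hφ => h φ (Set.mem_union_left _ hφ),
           fun φ hφ => h φ (Set.mem_union_right _ hφ)⟩
  · rintro ⟨h1, h2⟩ φ (hφ | hφ)
    · exact h1 φ hφ
    · exact h2 φ hφ

/-- `pref` of the union with a selector-free context, in explicit form. -/
private lemma pref_co_empty_sel (P R : OptProblem U) (h : R.sel = ∅) :
    pref Sem.co (P.union R) =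
      {I | I ∈ models P.gen ∩ models R.gen ∧
        ¬ ∃ J ∈ models P.gen ∩ models R.gen, gtSel P.sel J I} := by
  have hsel : (P.union R).sel = P.sel := by
    simp [OptProblem.union, h]
  have hgen : outcomes Sem.co (P.union R) = models P.gen ∩ models R.gen := by
    show models (P.gen ∪ R.gen) = _
    exact models_union' _ _
  unfold pref
  rw [hsel, hgen]

/-- A theory whose unique classical model is `I`. -/
private def pinOne (I : Set U) : Set (Formula U) :=
  {φ | (∃ a ∈ I, φ = Formula.atom a) ∨
       (∃ a, a ∉ I ∧ φ = Formula.imp (Formula.atom a) Formula.bot)}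

private lemma models_pinOne (I : Set U) : models (pinOne I) = {I} := by
  ext M
  simp only [models, Set.mem_setOf_eq, Set.mem_singleton_iff]
  constructor
  · intro h
    ext a
    constructor
    · intro haM
      by_contra haI
      exact h _ (Or.inr ⟨a, haI, rfl⟩) haM
    · intro haI
      exact h _ (Or.inl ⟨a, haI, rfl⟩)
  · rintro rfl φ (⟨a, ha, rfl⟩ | ⟨a, ha, rfl⟩)
    · exact ha
    · exact ha

/-- A theory whose classical models are exactly `A` and `B`,
given a distinguishing atom `d ∈ A \ B`. -/
private def pinTwo (A B : Set U) (d : U) : Set (Formula U) :=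
  {φ | (∃ a, a ∈ A ∧ a ∈ B ∧ φ = Formula.atom a) ∨
       (∃ a, a ∉ A ∧ a ∉ B ∧ φ = Formula.imp (Formula.atom a) Formula.bot) ∨
       (∃ a, a ∈ A ∧ a ∉ B ∧
          (φ = Formula.imp (Formula.atom d) (Formula.atom a) ∨
           φ = Formula.imp (Formula.atom a) (Formula.atom d))) ∨
       (∃ a, a ∉ A ∧ a ∈ B ∧
          (φ = Formula.imp (Formula.atom d) (Formula.imp (Formula.atom a) Formula.bot) ∨
           φ = Formula.imp (Formula.imp (Formula.atom d) Formula.bot) (Formula.atom a)))}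

private lemma models_pinTwo (A B : Set U) (d : U) (hdA : d ∈ A) (hdB : d ∉ B) :
    models (pinTwo A B d) = {A, B} := by
  ext M
  simp only [models, Set.mem_setOf_eq, Set.mem_insert_iff, Set.mem_singleton_iff]
  constructor
  · intro h
    by_cases hdM : d ∈ M
    · left
      ext a
      constructor
      · intro haM
        by_contra haA
        by_cases haB : a ∈ B
        · exact (h _ (Or.inr (Or.inr (Or.inr ⟨a, haA, haB, Or.inl rfl⟩))) hdM) haM
        · exact h _ (Or.inr (Or.inl ⟨a, haA, haB, rfl⟩)) haM
      · intro haA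
        by_cases haB : a ∈ B
        · exact h _ (Or.inl ⟨a, haA, haB, rfl⟩)
        · exact h _ (Or.inr (Or.inr (Or.inl ⟨a, haA, haB, Or.inl rfl⟩))) hdM
    · right
      ext a
      constructor
      · intro haM
        by_contra haB
        by_cases haA : a ∈ A
        · exact hdM (h _ (Or.inr (Or.inr (Or.inl ⟨a, haA, haB, Or.inr rfl⟩))) haM)
        · exact h _ (Or.inr (Or.inl ⟨a, haA, haB, rfl⟩)) haM
      · intro haB
        by_cases haA : a ∈ A
        · exact h _ (Or.inl ⟨a, haA, haB, rfl⟩)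
        · exact h _ (Or.inr (Or.inr (Or.inr ⟨a, haA, haB, Or.inr rfl⟩))) hdM
  · rintro (rfl | rfl) φ
      (⟨a, h1, h2, rfl⟩ | ⟨a, h1, h2, rfl⟩ | ⟨a, h1, h2, (rfl | rfl)⟩ |
       ⟨a, h1, h2, (rfl | rfl)⟩)
    · exact h1
    · exact h1
    · exact fun _ => h1
    · exact fun _ => hdA
    · exact fun _ h => h1 h
    · exact fun hf => (hf hdA).elim
    · exact h2
    · exact h2
    · exact fun h => (hdB h).elim
    · exact fun h => (h2 h).elim
    · exact fun h => (hdB h).elim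
    · exact fun _ => h2

/-- One inclusion of the model-set equality, from gen-equivalence. -/
private lemma mod_subset (P Q : OptProblem U) (hg : geqv Sem.co P Q) :
    models P.gen ⊆ models Q.gen := by
  intro I hI
  let R : OptProblem U := ⟨pinOne I, ∅, Set.finite_empty⟩
  have hR := hg R rfl
  rw [pref_co_empty_sel P R rfl, pref_co_empty_sel Q R rfl] at hR
  have hpin : models R.gen = {I} := models_pinOne I
  have hIin : I ∈ {J | J ∈ models P.gen ∩ models R.gen ∧
      ¬ ∃ K ∈ models P.gen ∩ models R.gen, gtSel P.sel K J} := by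
    refine ⟨⟨hI, by rw [hpin]; rfl⟩, ?_⟩
    rintro ⟨K, ⟨_, hK2⟩, hKI⟩
    rw [hpin, Set.mem_singleton_iff] at hK2
    subst hK2
    exact gtSel_irrefl _ _ hKI
  rw [hR] at hIin
  exact hIin.1.1

/-- Transfer of the strict preference on common models, from gen-equivalence. -/
private lemma gt_transfer (P Q : OptProblem U) (hg : geqv Sem.co P Q)
    (hmod : models P.gen = models Q.gen) {A B : Set U}
    (hA : A ∈ models P.gen) (hB : B ∈ models P.gen)
    (hgt : gtSel P.sel A B) : gtSel Q.sel A B := by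
  have hAB : A ≠ B := by
    rintro rfl
    exact gtSel_irrefl _ _ hgt
  obtain ⟨T, hT⟩ : ∃ T : Set (Formula U), models T = {A, B} := by
    have hex : ∃ a, (a ∈ A ∧ a ∉ B) ∨ (a ∈ B ∧ a ∉ A) := by
      by_contra hc
      push_neg at hc
      apply hAB
      ext a
      have := hc a
      tauto
    obtain ⟨d, hd | hd⟩ := hex
    · exact ⟨pinTwo A B d, models_pinTwo A B d hd.1 hd.2⟩
    · rw [Set.pair_comm]
      exact ⟨pinTwo B A d, models_pinTwo B A d hd.1 hd.2⟩
  let R : OptProblem U := ⟨T, ∅, Set.finite_empty⟩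
  have hTg : models R.gen = {A, B} := hT
  have hR := hg R rfl
  rw [pref_co_empty_sel P R rfl, pref_co_empty_sel Q R rfl] at hR
  have hBP : B ∉ {I | I ∈ models P.gen ∩ models R.gen ∧
      ¬ ∃ J ∈ models P.gen ∩ models R.gen, gtSel P.sel J I} := by
    rintro ⟨_, hno⟩
    exact hno ⟨A, ⟨hA, by rw [hTg]; exact Set.mem_insert _ _⟩, hgt⟩
  rw [hR] at hBP
  have hBout : B ∈ models Q.gen ∩ models R.gen :=
    ⟨hmod ▸ hB, by rw [hTg]; exact Set.mem_insert_of_mem _ rfl⟩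
  have hexJ : ∃ J ∈ models Q.gen ∩ models R.gen, gtSel Q.sel J B := by
    by_contra hno
    exact hBP ⟨hBout, hno⟩
  obtain ⟨J, ⟨_, hJ2⟩, hJB⟩ := hexJ
  rw [hTg] at hJ2
  rcases hJ2 with rfl | rfl
  · exact hJB
  · exact absurd hJB (gtSel_irrefl _ _)

/-- Theorem 9, CO case: `P ≡_g Q` iff `Mod(P^g) = Mod(Q^g)` and
`(>^P)_{Mod(P^g)} = (>^Q)_{Mod(Q^g)}`. -/
theorem stmt8 {U : Type} [Countable U] (P Q : OptProblem U) :
    geqv Sem.co P Q ↔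
      (models P.gen = models Q.gen ∧
       restrictRel (gtSel P.sel) (models P.gen) =
         restrictRel (gtSel Q.sel) (models Q.gen)) := by
  constructor
  · intro hg
    have hg' : geqv Sem.co Q P := fun R hR => (hg R hR).symm
    have hmod : models P.gen = models Q.gen :=
      Set.Subset.antisymm (mod_subset P Q hg) (mod_subset Q P hg')
    refine ⟨hmod, ?_⟩
    funext A B
    apply propext
    constructor
    · rintro ⟨hgt, hA, hB⟩
      exact ⟨gt_transfer P Q hg hmod hA hB hgt, hmod ▸ hA, hmod ▸ hB⟩
    · rintro ⟨hgt, hA, hB⟩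
      exact ⟨gt_transfer Q P hg' hmod.symm hA hB hgt, hmod.symm ▸ hA, hmod.symm ▸ hB⟩
  · rintro ⟨hmod, hrel⟩ R hR
    rw [pref_co_empty_sel P R hR, pref_co_empty_sel Q R hR]
    have key : ∀ I J : Set U, I ∈ models Q.gen → J ∈ models Q.gen →
        (gtSel P.sel J I ↔ gtSel Q.sel J I) := by
      intro I J hI hJ
      constructor
      · intro h
        have h' : restrictRel (gtSel P.sel) (models P.gen) J I :=
          ⟨h, hmod.symm ▸ hJ, hmod.symm ▸ hI⟩
        rw [hrel] at h'
        exact h'.1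
      · intro h
        have h' : restrictRel (gtSel Q.sel) (models Q.gen) J I := ⟨h, hJ, hI⟩
        rw [← hrel] at h'
        exact h'.1
    ext I
    simp only [Set.mem_setOf_eq, hmod]
    constructor
    · rintro ⟨hI, hno⟩
      refine ⟨hI, ?_⟩
      rintro ⟨J, hJ, hJI⟩
      exact hno ⟨J, hJ, (key I J hI.1 hJ.1).mpr hJI⟩
    · rintro ⟨hI, hno⟩
      refine ⟨hI, ?_⟩
      rintro ⟨J, hJ, hJI⟩
      exact hno ⟨J, hJ, (key I J hI.1 hJ.1).mp hJI⟩
end
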